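/- arXiv:2409.03635 — 2 statements merged into one kernel-verified Lean document; each statement's English description precedes it below -/
import Mathlib

section
/- Let W₁ and W₂ be orthogonal projections on a finite-dimensional complex inner product space and let ψ be a unit vector. Define F₁ = (‖W₁ψ‖² + ‖W₂ψ‖²)/2 and F₂ = (‖W₂W₁ψ‖² + ‖W₁W₂ψ‖²)/2. If F₁ > 1/2, then F₂ ≥ 2(F₁ − 1/2)². -/
open scoped InnerProductSpace ComplexConjugate

private lemma final_alg (p q t a b : ℝ) (hp0 : 0 ≤ p) (hq0 : 0 ≤ q) (hp1 : p ≤ 1) (hq1 : q ≤ 1)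
    (hs : 1 < p + q) (hcs : (t - p*q)^2 ≤ (q - q^2)*(p - p^2))
    (ha2 : t^2 ≤ a^2 * p) (hb2 : t^2 ≤ b^2 * q) : (p+q-1)^2 ≤ a^2 + b^2 := by
  have hq0' : 0 < q := by nlinarith
  have hp0' : 0 < p := by nlinarith
  have hprod : 0 ≤ (q - q^2)*(p - p^2) := by nlinarith
  obtain ⟨g, hg0, hg2⟩ : ∃ g : ℝ, 0 ≤ g ∧ g^2 = (q - q^2)*(p - p^2) :=
    ⟨Real.sqrt ((q - q^2)*(p - p^2)), Real.sqrt_nonneg _, Real.sq_sqrt hprod⟩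
  have hg' : g^2 = (p*q)*((1-p)*(1-q)) := by rw [hg2]; ring
  have h1 : p*q - g ≤ t := by nlinarith [hcs, hg2, hg0, sq_nonneg (t - p*q + g)]
  have h2 : 0 ≤ p*q - g := by nlinarith [hg2, hg0, mul_nonneg hp0 hq0]
  have h2g : 2*g ≤ p*q + (1-p)*(1-q) := by
    have hsq : (2*g)^2 ≤ (p*q + (1-p)*(1-q))^2 := by nlinarith [hg', sq_nonneg (p*q - (1-p)*(1-q))]
    have h2g0 : (0:ℝ) ≤ 2*g := by linarith
    have hv0 : (0:ℝ) ≤ p*q + (1-p)*(1-q) := by nlinarith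
    exact (pow_le_pow_iff_left₀ h2g0 hv0 (by norm_num)).mp hsq
  have h3 : p*q + (1-p)*(1-q) + 2*g ≤ p + q := by
    nlinarith [sq_nonneg (p - q), mul_nonneg (by linarith : (0:ℝ) ≤ p + q - 1) (by linarith : (0:ℝ) ≤ 2 - (p+q))]
  have hid : (p*q - g)^2 * (p*q + (1-p)*(1-q) + 2*g) = p*q*(p+q-1)^2 := by
    linear_combination (2*g + (1-p)*(1-q) - 3*(p*q)) * hg'
  have ht2 : (p*q - g)^2 ≤ t^2 := pow_le_pow_left₀ h2 h1 2
  have h4 : p*q*(p+q-1)^2 ≤ t^2 * (p+q) :=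
    calc p*q*(p+q-1)^2 = (p*q-g)^2 * (p*q+(1-p)*(1-q)+2*g) := hid.symm
      _ ≤ (p*q-g)^2 * (p+q) := mul_le_mul_of_nonneg_left h3 (sq_nonneg _)
      _ ≤ t^2 * (p+q) := mul_le_mul_of_nonneg_right ht2 (by linarith)
  have h5 : t^2 * (p+q) ≤ p*q*(a^2+b^2) := by
    have hA := mul_le_mul_of_nonneg_right ha2 hq0
    have hB := mul_le_mul_of_nonneg_right hb2 hp0
    calc t^2 * (p+q) = t^2*q + t^2*p := by ring
      _ ≤ a^2*p*q + b^2*q*p := add_le_add hA hB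
      _ = p*q*(a^2+b^2) := by ring
  have h6 : p*q*(p+q-1)^2 ≤ p*q*(a^2+b^2) := le_trans h4 h5
  have := (mul_le_mul_iff_right₀ (by positivity : (0:ℝ) < p*q)).mp h6
  linarith

set_option maxHeartbeats 1000000 in
theorem two_consecutive_measurements_single_outcome
    {E : Type*} [NormedAddCommGroup E] [InnerProductSpace ℂ E]
    [FiniteDimensional ℂ E]
    (W₁ W₂ : E →ₗ[ℂ] E)
    (hW₁sym : LinearMap.IsSymmetric W₁) (hW₂sym : LinearMap.IsSymmetric W₂)
    (hW₁proj : W₁ ∘ₗ W₁ = W₁) (hW₂proj : W₂ ∘ₗ W₂ = W₂)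
    (ψ : E) (hψ : ‖ψ‖ = 1)
    (F₁ F₂ : ℝ)
    (hF₁ : F₁ = (‖W₁ ψ‖ ^ 2 + ‖W₂ ψ‖ ^ 2) / 2)
    (hF₂ : F₂ = (‖W₂ (W₁ ψ)‖ ^ 2 + ‖W₁ (W₂ ψ)‖ ^ 2) / 2)
    (hF₁half : F₁ > 1 / 2) :
    F₂ ≥ 2 * (F₁ - 1 / 2) ^ 2 := by
  have hW₁idem : ∀ v : E, W₁ (W₁ v) = W₁ v := fun v => by
    simpa using DFunLike.congr_fun hW₁proj v
  have hW₂idem : ∀ v : E, W₂ (W₂ v) = W₂ v := fun v => by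
    simpa using DFunLike.congr_fun hW₂proj v
  set x := W₁ ψ with hx
  set y := W₂ ψ with hy
  set q := ‖x‖ ^ 2 with hqdef
  set p := ‖y‖ ^ 2 with hpdef
  set t := (⟪x, y⟫_ℂ).re with htdef
  set a := ‖W₂ x‖ with hadef
  set b := ‖W₁ y‖ with hbdef
  clear_value x y q p t a b
  have hqi : ⟪ψ, x⟫_ℂ = ⟪x, x⟫_ℂ := by
    calc ⟪ψ, x⟫_ℂ = ⟪ψ, W₁ (W₁ ψ)⟫_ℂ := by rw [hW₁idem ψ, ← hx]
      _ = ⟪W₁ ψ, W₁ ψ⟫_ℂ := (hW₁sym ψ (W₁ ψ)).symm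
      _ = ⟪x, x⟫_ℂ := by rw [← hx]
  have hpi : ⟪ψ, y⟫_ℂ = ⟪y, y⟫_ℂ := by
    calc ⟪ψ, y⟫_ℂ = ⟪ψ, W₂ (W₂ ψ)⟫_ℂ := by rw [hW₂idem ψ, ← hy]
      _ = ⟪W₂ ψ, W₂ ψ⟫_ℂ := (hW₂sym ψ (W₂ ψ)).symm
      _ = ⟪y, y⟫_ℂ := by rw [← hy]
  have hq : (⟪ψ, x⟫_ℂ).re = q := by
    rw [hqi, hqdef]
    exact inner_self_eq_norm_sq (𝕜 := ℂ) x
  have hp : (⟪ψ, y⟫_ℂ).re = p := by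
    rw [hpi, hpdef]
    exact inner_self_eq_norm_sq (𝕜 := ℂ) y
  have hq0 : (0:ℝ) ≤ q := hqdef ▸ sq_nonneg ‖x‖
  have hp0 : (0:ℝ) ≤ p := hpdef ▸ sq_nonneg ‖y‖
  have hq1 : q ≤ 1 := by
    have h2 : (⟪ψ, x⟫_ℂ).re ≤ ‖ψ‖ * ‖x‖ := re_inner_le_norm (𝕜 := ℂ) ψ x
    rw [hq, hψ, one_mul] at h2
    nlinarith [norm_nonneg x]
  have hp1 : p ≤ 1 := by
    have h2 : (⟪ψ, y⟫_ℂ).re ≤ ‖ψ‖ * ‖y‖ := re_inner_le_norm (𝕜 := ℂ) ψ y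
    rw [hp, hψ, one_mul] at h2
    nlinarith [norm_nonneg y]
  have hs : 1 < p + q := by rw [hF₁] at hF₁half; linarith
  have hrxψ : (⟪x, ψ⟫_ℂ).re = q := by
    rw [← hq]; exact inner_re_symm (𝕜 := ℂ) x ψ
  have hryψ : (⟪y, ψ⟫_ℂ).re = p := by
    rw [← hp]; exact inner_re_symm (𝕜 := ℂ) y ψ
  have hψψ : (⟪ψ, ψ⟫_ℂ).re = 1 := by
    have : (⟪ψ, ψ⟫_ℂ).re = ‖ψ‖ ^ 2 := inner_self_eq_norm_sq (𝕜 := ℂ) ψ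
    rw [this, hψ]; norm_num
  have hun : ‖x - (q:ℂ) • ψ‖^2 = q - q^2 := by
    have h : ‖x - (q:ℂ) • ψ‖^2 = ‖x‖^2 - 2 * (⟪x, (q:ℂ) • ψ⟫_ℂ).re + ‖(q:ℂ) • ψ‖^2 :=
      norm_sub_sq (𝕜 := ℂ) x ((q:ℂ) • ψ)
    rw [h, inner_smul_right, Complex.re_ofReal_mul, hrxψ, norm_smul, hψ, mul_one,
      Complex.norm_real, Real.norm_eq_abs, sq_abs, ← hqdef]
    ring
  have hvn : ‖y - (p:ℂ) • ψ‖^2 = p - p^2 := by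
    have h : ‖y - (p:ℂ) • ψ‖^2 = ‖y‖^2 - 2 * (⟪y, (p:ℂ) • ψ⟫_ℂ).re + ‖(p:ℂ) • ψ‖^2 :=
      norm_sub_sq (𝕜 := ℂ) y ((p:ℂ) • ψ)
    rw [h, inner_smul_right, Complex.re_ofReal_mul, hryψ, norm_smul, hψ, mul_one,
      Complex.norm_real, Real.norm_eq_abs, sq_abs, ← hpdef]
    ring
  have hre_uv : (⟪x - (q:ℂ) • ψ, y - (p:ℂ) • ψ⟫_ℂ).re = t - p*q := by
    rw [inner_sub_left, inner_sub_right, inner_sub_right, inner_smul_right, inner_smul_right,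
      inner_smul_left, inner_smul_left, Complex.conj_ofReal]
    simp only [Complex.sub_re, Complex.re_ofReal_mul]
    rw [hrxψ, hp, hψψ, htdef]
    ring
  have hcs : (t - p*q)^2 ≤ (q - q^2)*(p - p^2) := by
    have hle : (⟪x - (q:ℂ) • ψ, y - (p:ℂ) • ψ⟫_ℂ).re ≤ ‖x - (q:ℂ) • ψ‖ * ‖y - (p:ℂ) • ψ‖ :=
      re_inner_le_norm (𝕜 := ℂ) _ _
    have hge' : (⟪-(x - (q:ℂ) • ψ), y - (p:ℂ) • ψ⟫_ℂ).re ≤ ‖-(x - (q:ℂ) • ψ)‖ * ‖y - (p:ℂ) • ψ‖ :=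
      re_inner_le_norm (𝕜 := ℂ) _ _
    rw [inner_neg_left, Complex.neg_re, norm_neg] at hge'
    rw [hre_uv] at hle hge'
    have hNN : (‖x - (q:ℂ) • ψ‖ * ‖y - (p:ℂ) • ψ‖)^2 = (q - q^2)*(p - p^2) := by
      rw [mul_pow, hun, hvn]
    calc (t - p*q)^2 ≤ (‖x - (q:ℂ) • ψ‖ * ‖y - (p:ℂ) • ψ‖)^2 := sq_le_sq' (by linarith) hle
      _ = (q - q^2)*(p - p^2) := hNN
  have ha : t ≤ a * ‖y‖ := by
    have h1 : ⟪x, y⟫_ℂ = ⟪W₂ x, y⟫_ℂ := by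
      calc ⟪x, y⟫_ℂ = ⟪x, W₂ (W₂ ψ)⟫_ℂ := by rw [hW₂idem ψ, ← hy]
        _ = ⟪W₂ x, W₂ ψ⟫_ℂ := (hW₂sym x (W₂ ψ)).symm
        _ = ⟪W₂ x, y⟫_ℂ := by rw [← hy]
    calc t = (⟪W₂ x, y⟫_ℂ).re := by rw [htdef, h1]
      _ ≤ ‖W₂ x‖ * ‖y‖ := re_inner_le_norm (𝕜 := ℂ) _ _
      _ = a * ‖y‖ := by rw [hadef]
  have hb : t ≤ ‖x‖ * b := by
    have h1 : ⟪x, y⟫_ℂ = ⟪x, W₁ y⟫_ℂ := by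
      calc ⟪x, y⟫_ℂ = ⟪W₁ (W₁ ψ), y⟫_ℂ := by rw [hW₁idem ψ, ← hx]
        _ = ⟪W₁ ψ, W₁ y⟫_ℂ := hW₁sym (W₁ ψ) y
        _ = ⟪x, W₁ y⟫_ℂ := by rw [← hx]
    calc t = (⟪x, W₁ y⟫_ℂ).re := by rw [htdef, h1]
      _ ≤ ‖x‖ * ‖W₁ y‖ := re_inner_le_norm (𝕜 := ℂ) _ _
      _ = ‖x‖ * b := by rw [hbdef]
  have ht0 : 0 ≤ t := by
    by_contra h
    push_neg at h
    have hu0 : 0 ≤ p*q := mul_nonneg hp0 hq0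
    nlinarith [hcs, mul_nonneg hu0 (by linarith : (0:ℝ) ≤ p+q-1),
      mul_pos (by linarith : (0:ℝ) < -t) (by linarith : (0:ℝ) < 2*(p*q) - t)]
  have ha2 : t^2 ≤ a^2 * p := by
    have h : t*t ≤ (a*‖y‖)*(a*‖y‖) := mul_le_mul ha ha ht0 (le_trans ht0 ha)
    calc t^2 = t*t := sq t
      _ ≤ (a*‖y‖)*(a*‖y‖) := h
      _ = a^2 * ‖y‖^2 := by ring
      _ = a^2 * p := by rw [← hpdef]
  have hb2 : t^2 ≤ b^2 * q := by
    have h : t*t ≤ (‖x‖*b)*(‖x‖*b) := mul_le_mul hb hb ht0 (le_trans ht0 hb)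
    calc t^2 = t*t := sq t
      _ ≤ (‖x‖*b)*(‖x‖*b) := h
      _ = b^2 * ‖x‖^2 := by ring
      _ = b^2 * q := by rw [← hqdef]
  have key := final_alg p q t a b hp0 hq0 hp1 hq1 hs hcs ha2 hb2
  rw [hF₁, hF₂]
  nlinarith [key]
end

section
/- Let X be a positive semidefinite operator with X ≤ I on a finite-dimensional Hilbert space and σ a positive semidefinite operator with Tr σ ≤ 1. Then ‖σ − √X σ √X‖₁ ≤ 2·√(1 − Tr[Xσ]). -/
open Matrix BigOperators ComplexOrder

/-- The positive square root of a positive semidefinite matrix (removed from Mathlib;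
restored here with its former definition). -/
noncomputable def Matrix.PosSemidef.sqrt {n 𝕜 : Type*} [Fintype n] [RCLike 𝕜] [DecidableEq n]
    {A : Matrix n n 𝕜} (hA : A.PosSemidef) : Matrix n n 𝕜 :=
  (hA.1.eigenvectorUnitary : Matrix n n 𝕜) *
    diagonal (fun i => ((Real.sqrt (hA.1.eigenvalues i) : ℝ) : 𝕜)) *
    (star hA.1.eigenvectorUnitary : Matrix n n 𝕜)

/-- The trace norm `‖A‖₁ = Tr √(AᴴA)` of a complex matrix. -/
noncomputable def traceNorm {n : Type*} [Fintype n] [DecidableEq n]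
    (A : Matrix n n ℂ) : ℝ :=
  ((Matrix.posSemidef_conjTranspose_mul_self A).sqrt.trace).re

set_option linter.unusedSectionVars false

namespace GentleAux
variable {n : Type*} [Fintype n] [DecidableEq n]

noncomputable def cd (U : Matrix.unitaryGroup n ℂ) (d : n → ℝ) : Matrix n n ℂ :=
  (U : Matrix n n ℂ) * Matrix.diagonal (fun i => (d i : ℂ)) * (star U : Matrix n n ℂ)

lemma cd_mul (U : Matrix.unitaryGroup n ℂ) (a b : n → ℝ) :
    cd U a * cd U b = cd U (a * b) := by
  have h : (star (U : Matrix n n ℂ)) * (U : Matrix n n ℂ) = 1 :=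
    (Matrix.mem_unitaryGroup_iff').mp U.2
  have step : cd U a * cd U b
      = (U : Matrix n n ℂ) * Matrix.diagonal (fun i => (a i : ℂ)) * ((star (U : Matrix n n ℂ)) *
        (U : Matrix n n ℂ)) * (Matrix.diagonal (fun i => (b i : ℂ)) * (star U : Matrix n n ℂ)) := by
    simp only [cd, mul_assoc]
  rw [step, h, mul_one, cd]
  have hd : (Matrix.diagonal (fun i => (a i : ℂ))) * (Matrix.diagonal (fun i => (b i : ℂ)))
      = Matrix.diagonal (fun i => ((a * b) i : ℂ)) := by
    rw [diagonal_mul_diagonal]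
    have : (fun i => (a i : ℂ) * (b i : ℂ)) = fun i => ((a * b) i : ℂ) := by
      funext i; simp
    rw [this]
  rw [← hd]
  simp only [mul_assoc]

lemma cd_one (U : Matrix.unitaryGroup n ℂ) : cd U (fun _ => 1) = 1 := by
  simp only [cd, Complex.ofReal_one, diagonal_one, mul_one]
  exact (Matrix.mem_unitaryGroup_iff).mp U.2

lemma cd_sub (U : Matrix.unitaryGroup n ℂ) (a b : n → ℝ) :
    cd U a - cd U b = cd U (a - b) := by
  have hd : (Matrix.diagonal (fun i => (a i : ℂ))) - (Matrix.diagonal (fun i => (b i : ℂ)))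
      = Matrix.diagonal (fun i => ((a - b) i : ℂ)) := by
    rw [diagonal_sub]
    have : (fun i => (a i : ℂ) - (b i : ℂ)) = fun i => ((a - b) i : ℂ) := by
      funext i; simp
    rw [this]
  simp only [cd, ← sub_mul, ← mul_sub, hd]

lemma cd_conjTranspose (U : Matrix.unitaryGroup n ℂ) (d : n → ℝ) :
    (cd U d)ᴴ = cd U d := by
  have hd : (Matrix.diagonal (fun i => (d i : ℂ)))ᴴ = Matrix.diagonal (fun i => (d i : ℂ)) := by
    rw [diagonal_conjTranspose]
    have : (star fun i => (d i : ℂ)) = fun i => (d i : ℂ) := by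
      funext i; simp [Pi.star_def, Complex.conj_ofReal]
    rw [this]
  rw [cd, conjTranspose_mul, conjTranspose_mul, hd, ← Matrix.star_eq_conjTranspose,
    ← Matrix.star_eq_conjTranspose, star_star, mul_assoc]

lemma cd_trace (U : Matrix.unitaryGroup n ℂ) (d : n → ℝ) :
    (cd U d).trace = ∑ i, (d i : ℂ) := by
  rw [cd, trace_mul_cycle, (Matrix.mem_unitaryGroup_iff').mp U.2, one_mul, trace_diagonal]

lemma cd_posSemidef (U : Matrix.unitaryGroup n ℂ) {d : n → ℝ} (hd : ∀ i, 0 ≤ d i) :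
    (cd U d).PosSemidef := by
  rw [cd, Matrix.star_eq_conjTranspose]
  exact Matrix.PosSemidef.mul_mul_conjTranspose_same
    (posSemidef_diagonal_iff.mpr fun i => Complex.zero_le_real.mpr (hd i)) _

lemma posSemidef_cd_iff (U : Matrix.unitaryGroup n ℂ) (d : n → ℝ) :
    (cd U d).PosSemidef ↔ ∀ i, 0 ≤ d i := by
  constructor
  · intro h i
    have h2 := h.conjTranspose_mul_mul_same (B := (U : Matrix n n ℂ))
    rw [← Matrix.star_eq_conjTranspose] at h2
    have step : (star (U : Matrix n n ℂ)) * cd U d * (U : Matrix n n ℂ)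
        = ((star (U : Matrix n n ℂ)) * (U : Matrix n n ℂ)) *
          Matrix.diagonal (fun i => (d i : ℂ)) *
          ((star (U : Matrix n n ℂ)) * (U : Matrix n n ℂ)) := by
      simp only [cd, mul_assoc]
    rw [step, (Matrix.mem_unitaryGroup_iff').mp U.2, one_mul, mul_one] at h2
    exact Complex.zero_le_real.mp (posSemidef_diagonal_iff.mp h2 i)
  · exact cd_posSemidef U

lemma spectral_cd {A : Matrix n n ℂ} (hA : A.IsHermitian) :
    A = cd hA.eigenvectorUnitary hA.eigenvalues := hA.spectral_theorem

lemma sqrt_cd {A : Matrix n n ℂ} (hA : A.PosSemidef) :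
    hA.sqrt = cd hA.1.eigenvectorUnitary (fun i => Real.sqrt (hA.1.eigenvalues i)) := rfl

lemma _root_.Matrix.PosSemidef.posSemidef_sqrt {A : Matrix n n ℂ} (hA : A.PosSemidef) :
    hA.sqrt.PosSemidef := by
  rw [sqrt_cd]
  exact cd_posSemidef _ fun i => Real.sqrt_nonneg _

lemma _root_.Matrix.PosSemidef.sqrt_mul_self {A : Matrix n n ℂ} (hA : A.PosSemidef) :
    hA.sqrt * hA.sqrt = A := by
  rw [sqrt_cd, cd_mul]
  conv_rhs => rw [spectral_cd hA.1]
  congr 1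
  funext i
  simp only [Pi.mul_apply]
  exact Real.mul_self_sqrt (hA.eigenvalues_nonneg i)

open scoped MatrixOrder in
lemma _root_.Matrix.PosSemidef.eq_sqrt_of_sq_eq {A B : Matrix n n ℂ} (hA : A.PosSemidef)
    (hB : B.PosSemidef) (h : A ^ 2 = B) : A = hB.sqrt := by
  have key : hB.sqrt = CFC.sqrt B := by
    rw [CFC.sqrt_eq_real_sqrt B hB.nonneg, cfcₙ_eq_cfc, hB.1.cfc_eq]
    rfl
  rw [key]
  exact ((CFC.sqrt_eq_iff B A hB.nonneg hA.nonneg).mpr (by rw [← h, sq])).symm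

lemma trace_re_nonneg {M : Matrix n n ℂ} (hM : M.PosSemidef) : 0 ≤ M.trace.re := by
  have h : ∀ i, 0 ≤ (M i i).re := by
    intro i
    have := hM.diag_nonneg (i := i)
    rw [Complex.le_def] at this
    simpa using this.1
  rw [Matrix.trace, Complex.re_sum]
  exact Finset.sum_nonneg fun i _ => h i

lemma trace_mul_re_nonneg {M N : Matrix n n ℂ} (hM : M.PosSemidef) (hN : N.PosSemidef) :
    0 ≤ ((M * N).trace).re := by
  have hR := hN.posSemidef_sqrt
  have hRR : hN.sqrt * hN.sqrt = N := hN.sqrt_mul_self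
  have key : (hN.sqrt * M * hN.sqrt).trace = (M * N).trace := by
    rw [trace_mul_cycle, hRR, trace_mul_comm]
  rw [← key]
  refine trace_re_nonneg ?_
  have := hM.mul_mul_conjTranspose_same hN.sqrt
  rwa [hR.1.eq] at this

lemma trace_cs (A B : Matrix n n ℂ) :
    ((A * B).trace).re ≤
      Real.sqrt (((A * Aᴴ).trace).re) * Real.sqrt (((Bᴴ * B).trace).re) := by
  have hAA : ((A * Aᴴ).trace).re = ∑ p : n × n, ‖A p.1 p.2‖ ^ 2 := by
    rw [Fintype.sum_prod_type]
    simp [Matrix.trace, Matrix.diag, Matrix.mul_apply, conjTranspose_apply, Complex.re_sum,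
      Complex.mul_conj, Complex.sq_norm, Complex.normSq_apply]
  have hBB : ((Bᴴ * B).trace).re = ∑ p : n × n, ‖B p.2 p.1‖ ^ 2 := by
    rw [Fintype.sum_prod_type]
    simp [Matrix.trace, Matrix.diag, Matrix.mul_apply, conjTranspose_apply, Complex.re_sum,
      Complex.mul_conj', Complex.sq_norm, Complex.normSq_apply]
  have h1 : ((A * B).trace).re
      ≤ ∑ p : n × n, ‖A p.1 p.2‖ * ‖B p.2 p.1‖ := by
    calc ((A * B).trace).re ≤ ‖(A * B).trace‖ := Complex.re_le_norm _
      _ ≤ ∑ i, ‖(A * B) i i‖ := norm_sum_le _ _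
      _ ≤ ∑ i, ∑ j, ‖A i j * B j i‖ := by
          refine Finset.sum_le_sum fun i _ => ?_
          rw [Matrix.mul_apply]
          exact norm_sum_le _ _
      _ = ∑ p : n × n, ‖A p.1 p.2‖ * ‖B p.2 p.1‖ := by
          rw [Fintype.sum_prod_type]
          simp [norm_mul]
  rw [hAA, hBB]
  exact h1.trans (Real.sum_mul_le_sqrt_mul_sqrt _ _ _)

end GentleAux

open GentleAux

set_option maxHeartbeats 1000000 in
theorem gentle_measurement
    {n : Type*} [Fintype n] [DecidableEq n]
    (X σ : Matrix n n ℂ)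
    (hX : X.PosSemidef) (hXle : (1 - X).PosSemidef)
    (hσ : σ.PosSemidef) (hσtr : (σ.trace).re ≤ 1) :
    traceNorm (σ - hX.sqrt * σ * hX.sqrt)
      ≤ 2 * Real.sqrt (1 - ((X * σ).trace).re) := by
  classical
  set t : ℝ := ((X * σ).trace).re with ht_def
  set Q : Matrix n n ℂ := hX.sqrt with hQ_def
  have hQ : Q.PosSemidef := hX.posSemidef_sqrt
  have hQQ : Q * Q = X := hX.sqrt_mul_self
  -- spectral data of X
  set V := hX.1.eigenvectorUnitary with hV_def
  set μ : n → ℝ := hX.1.eigenvalues with hμ_def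
  have hXcd : X = cd V μ := spectral_cd hX.1
  have hQcd : Q = cd V (fun i => Real.sqrt (μ i)) := sqrt_cd hX
  have hμ0 : ∀ i, 0 ≤ μ i := hX.eigenvalues_nonneg
  have hμ1 : ∀ i, μ i ≤ 1 := by
    intro i
    have h1 : (1 : Matrix n n ℂ) - X = cd V ((fun _ => 1) - μ) := by
      rw [← cd_sub, cd_one, hXcd]
    have := (posSemidef_cd_iff V _).mp (h1 ▸ hXle) i
    simpa using this
  have hμs1 : ∀ i, Real.sqrt (μ i) ≤ 1 := fun i =>
    Real.sqrt_le_one.mpr (hμ1 i)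
  -- 1 - Q and the key operator inequality
  have h1Qcd : (1 : Matrix n n ℂ) - Q = cd V ((fun _ => 1) - fun i => Real.sqrt (μ i)) := by
    rw [← cd_sub, cd_one, hQcd]
  have hkey : ((1 - X) - (1 - Q) * (1 - Q)).PosSemidef := by
    rw [h1Qcd, cd_mul]
    have h1X : (1 : Matrix n n ℂ) - X = cd V ((fun _ => 1) - μ) := by
      rw [← cd_sub, cd_one, hXcd]
    rw [h1X, cd_sub]
    refine cd_posSemidef V fun i => ?_
    have h0 := hμ0 i
    have h1 := hμ1 i
    have hs : Real.sqrt (μ i) ^ 2 = μ i := Real.sq_sqrt h0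
    have hs1 := hμs1 i
    have hs0 := Real.sqrt_nonneg (μ i)
    simp only [Pi.sub_apply, Pi.mul_apply]
    nlinarith [hs, hs1, hs0]
  have h1Qherm : ((1 : Matrix n n ℂ) - Q)ᴴ = 1 - Q := by
    rw [conjTranspose_sub, hQ.1.eq, conjTranspose_one]
  -- The difference operator D and its spectral data
  have hDh : (σ - Q * σ * Q).IsHermitian := by
    have : (σ - Q * σ * Q)ᴴ = σ - Q * σ * Q := by
      rw [conjTranspose_sub, conjTranspose_mul, conjTranspose_mul, hσ.1.eq, hQ.1.eq, mul_assoc]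
    exact this
  set U := hDh.eigenvectorUnitary with hU_def
  set lam : n → ℝ := hDh.eigenvalues with hlam_def
  have hDcd : σ - Q * σ * Q = cd U lam := spectral_cd hDh
  set s : n → ℝ := fun i => if 0 ≤ lam i then 1 else -1 with hs_def
  set W : Matrix n n ℂ := cd U s with hW_def
  have hW2 : W * W = 1 := by
    rw [hW_def, cd_mul]
    have : s * s = fun _ => 1 := by
      funext i; simp only [Pi.mul_apply, hs_def]; split <;> norm_num
    rw [this, cd_one]
  have hWH : Wᴴ = W := cd_conjTranspose U s
  -- trace norm of D equals ∑ |lam i|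
  have habs : (fun i => |lam i|) * (fun i => |lam i|) = lam * lam := by
    funext i; simp [abs_mul_abs_self]
  have hS : (cd U (fun i => |lam i|)).PosSemidef := cd_posSemidef U fun i => abs_nonneg _
  have hSsq : (cd U (fun i => |lam i|)) ^ 2 = (σ - Q * σ * Q)ᴴ * (σ - Q * σ * Q) := by
    rw [hDh.eq, pow_two, cd_mul, habs, hDcd, cd_mul]
  have hsqrt_eq := hS.eq_sqrt_of_sq_eq (Matrix.posSemidef_conjTranspose_mul_self _) hSsq
  have htn : traceNorm (σ - Q * σ * Q) = ∑ i, |lam i| := by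
    rw [traceNorm, ← hsqrt_eq, cd_trace, Complex.re_sum]
    simp
  -- trace of W * D equals the same quantity
  have hWD : ((W * (σ - Q * σ * Q)).trace).re = ∑ i, |lam i| := by
    rw [hDcd, hW_def, cd_mul, cd_trace, Complex.re_sum]
    have : ∀ i, ((s * lam) i : ℂ).re = |lam i| := by
      intro i
      simp only [Pi.mul_apply, hs_def, Complex.ofReal_mul]
      rw [← Complex.ofReal_mul, Complex.ofReal_re]
      rcases le_or_gt 0 (lam i) with h | h
      · rw [if_pos h, one_mul, abs_of_nonneg h]
      · rw [if_neg (not_le.mpr h), neg_one_mul, abs_of_neg h]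
    exact Finset.sum_congr rfl fun i _ => this i
  -- square root of σ
  set R : Matrix n n ℂ := hσ.sqrt with hR_def
  have hRpsd : R.PosSemidef := hσ.posSemidef_sqrt
  have hRR : R * R = σ := hσ.sqrt_mul_self
  have hRH : Rᴴ = R := hRpsd.1.eq
  -- useful nonnegativity facts
  have ht0 : 0 ≤ t := trace_mul_re_nonneg hX hσ
  have h1Xσ : (((1 - X) * σ).trace).re = σ.trace.re - t := by
    rw [sub_mul, one_mul, trace_sub, Complex.sub_re]
  have ht1 : t ≤ 1 := by
    have := trace_mul_re_nonneg hXle hσ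
    rw [h1Xσ] at this
    linarith
  -- the quantity c = Tr[(1-Q)² σ]
  set c : ℝ := ((((1 - Q) * (1 - Q)) * σ).trace).re with hc_def
  have hc : c ≤ 1 - t := by
    have h0 := trace_mul_re_nonneg hkey hσ
    rw [sub_mul, trace_sub, Complex.sub_re, h1Xσ] at h0
    have : c ≤ σ.trace.re - t := by rw [hc_def]; linarith
    linarith
  -- Term 1 bound
  have hterm1 : ((W * (1 - Q) * σ).trace).re ≤ Real.sqrt (1 - t) := by
    have hrw : W * (1 - Q) * σ = (W * (1 - Q) * R) * R := by
      rw [← hRR]; noncomm_ring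
    have hcs := trace_cs (W * (1 - Q) * R) R
    have hAH : (W * (1 - Q) * R)ᴴ = R * (1 - Q) * W := by
      rw [conjTranspose_mul, conjTranspose_mul, hRH, h1Qherm, hWH, mul_assoc]
    have htrA : (((W * (1 - Q) * R) * (W * (1 - Q) * R)ᴴ).trace).re = c := by
      rw [hAH]
      have e1 : (W * (1 - Q) * R) * (R * (1 - Q) * W)
          = W * ((1 - Q) * σ * (1 - Q)) * W := by
        rw [← hRR]; noncomm_ring
      rw [e1, trace_mul_cycle, ← mul_assoc, hW2, one_mul,
        show ((1 - Q) * σ * (1 - Q)).trace = ((1 - Q) * (1 - Q) * σ).trace from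
          trace_mul_cycle _ _ _, hc_def]
    have htrB : ((Rᴴ * R).trace).re = σ.trace.re := by rw [hRH, hRR]
    rw [hrw]
    calc (((W * (1 - Q) * R) * R).trace).re
        ≤ Real.sqrt ((((W * (1 - Q) * R) * (W * (1 - Q) * R)ᴴ).trace).re) *
          Real.sqrt (((Rᴴ * R).trace).re) := hcs
      _ ≤ Real.sqrt (1 - t) * 1 := by
          apply mul_le_mul
          · rw [htrA]; exact Real.sqrt_le_sqrt hc
          · rw [htrB]; exact Real.sqrt_le_one.mpr hσtr
          · exact Real.sqrt_nonneg _
          · exact Real.sqrt_nonneg _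
      _ = Real.sqrt (1 - t) := mul_one _
  -- Term 2 bound
  have hterm2 : ((W * Q * σ * (1 - Q)).trace).re ≤ Real.sqrt (1 - t) := by
    have hrw : W * Q * σ * (1 - Q) = (W * Q * R) * (R * (1 - Q)) := by
      rw [← hRR]; noncomm_ring
    have hcs := trace_cs (W * Q * R) (R * (1 - Q))
    have hAH : (W * Q * R)ᴴ = R * Q * W := by
      rw [conjTranspose_mul, conjTranspose_mul, hRH, hQ.1.eq, hWH, mul_assoc]
    have htrA : (((W * Q * R) * (W * Q * R)ᴴ).trace).re = t := by
      rw [hAH]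
      have e1 : (W * Q * R) * (R * Q * W) = W * (Q * σ * Q) * W := by
        rw [← hRR]; noncomm_ring
      rw [e1, trace_mul_cycle, ← mul_assoc, hW2, one_mul,
        show (Q * σ * Q).trace = (X * σ).trace from by
          rw [trace_mul_cycle, hQQ], ht_def]
    have hBH : (R * (1 - Q))ᴴ = (1 - Q) * R := by
      rw [conjTranspose_mul, hRH, h1Qherm]
    have htrB : (((R * (1 - Q))ᴴ * (R * (1 - Q))).trace).re = c := by
      rw [hBH]
      have e1 : ((1 - Q) * R) * (R * (1 - Q)) = (1 - Q) * σ * (1 - Q) := by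
        rw [← hRR]; noncomm_ring
      rw [e1,
        show ((1 - Q) * σ * (1 - Q)).trace = ((1 - Q) * (1 - Q) * σ).trace from
          trace_mul_cycle _ _ _, hc_def]
    rw [hrw]
    calc (((W * Q * R) * (R * (1 - Q))).trace).re
        ≤ Real.sqrt ((((W * Q * R) * (W * Q * R)ᴴ).trace).re) *
          Real.sqrt ((((R * (1 - Q))ᴴ * (R * (1 - Q))).trace).re) := hcs
      _ ≤ 1 * Real.sqrt (1 - t) := by
          apply mul_le_mul
          · rw [htrA]; exact Real.sqrt_le_one.mpr ht1
          · rw [htrB]; exact Real.sqrt_le_sqrt hc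
          · exact Real.sqrt_nonneg _
          · exact zero_le_one
      _ = Real.sqrt (1 - t) := one_mul _
  -- assemble
  have hsplit : W * (σ - Q * σ * Q) = W * (1 - Q) * σ + W * Q * σ * (1 - Q) := by
    noncomm_ring
  have hmain : ((W * (σ - Q * σ * Q)).trace).re
      ≤ 2 * Real.sqrt (1 - t) := by
    rw [hsplit, trace_add, Complex.add_re]
    linarith
  calc traceNorm (σ - Q * σ * Q) = ∑ i, |lam i| := htn
    _ = ((W * (σ - Q * σ * Q)).trace).re := hWD.symm
    _ ≤ 2 * Real.sqrt (1 - t) := hmain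
end
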